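/- Let G be a finite group, H a normal subgroup, R an algebraically closed field of characteristic not dividing |G|, and V an irreducible R-representation of G. Then the restriction of V to H is semisimple, G permutes the H-isotypic components of V|_H transitively by conjugation, and in particular the number of isotypic components of V|_H divides the index [G:H]. -/

import Mathlib

/-!
Since `H` is normal, each `ρ g` carries `H`-invariant, `H`-simple and `H`-isomorphic subspaces
to subspaces of the same kind, hence maps the isotypic component of `S` onto that of `ρ g S`.
Averaging a linear projection onto an `H`-invariant subspace over `H` makes it `H`-equivariant;
its kernel is an invariant complement. Take the equivariant projection `π` onto a simple `T`.
The translates of the isotypic component of a simple `S` span the irreducible `V`, so one of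
them, the component of some `ρ g S`, is not killed by `π`; Schur's argument then gives
`ρ g S ≅ T`, so `G` is transitive on components. The stabilizer of a component contains `H`,
and the number of components is its index, which divides `[G : H]`.
-/

section

variable {R G V : Type*} [Field R] [Group G] [AddCommGroup V] [Module R V]

/-- A submodule is `H`-invariant. -/
def IsHInvariant (H : Subgroup G) (ρ : Representation R G V) (W : Submodule R V) : Prop :=
  ∀ h ∈ H, ∀ v ∈ W, ρ h v ∈ W

/-- A submodule is an irreducible `H`-subrepresentation. -/
def IsHSimple (H : Subgroup G) (ρ : Representation R G V) (W : Submodule R V) : Prop :=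
  W ≠ ⊥ ∧ IsHInvariant H ρ W ∧
    ∀ W' ≤ W, IsHInvariant H ρ W' → W' = ⊥ ∨ W' = W

/-- Two `H`-subrepresentations are isomorphic: there is a linear endomorphism of `V` which is
`H`-equivariant and injective on `W₁` and maps `W₁` onto `W₂`. -/
def HIsoSub (H : Subgroup G) (ρ : Representation R G V) (W₁ W₂ : Submodule R V) : Prop :=
  ∃ f : V →ₗ[R] V, (∀ h ∈ H, ∀ v ∈ W₁, f (ρ h v) = ρ h (f v)) ∧
    Set.InjOn f (W₁ : Set V) ∧ W₁.map f = W₂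

/-- `W` is an `H`-isotypic component of `V`: the sum of all irreducible `H`-subrepresentations
isomorphic to a given one. -/
def IsIsotypicComponent (H : Subgroup G) (ρ : Representation R G V)
    (W : Submodule R V) : Prop :=
  ∃ S : Submodule R V, IsHSimple H ρ S ∧
    W = sSup {W' : Submodule R V | IsHSimple H ρ W' ∧ HIsoSub H ρ S W'}

theorem MulAction.exists_fin_enumeration_orbit_dvd_index {Γ X : Type*} [Group Γ] [Finite Γ]
    [MulAction Γ X] (x : X) {H : Subgroup Γ} (hH : H ≤ stabilizer Γ x) :
    ∃ (n : ℕ) (C : Fin n → X),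
      Function.Injective C ∧ Set.range C = orbit Γ x ∧ n ∣ H.index := by
  have : Finite (orbit Γ x) := (Set.finite_range (· • x)).to_subtype
  let e := Finite.equivFin (orbit Γ x)
  refine ⟨Nat.card (orbit Γ x), Subtype.val ∘ e.symm,
    Subtype.val_injective.comp e.symm.injective, ?_, ?_⟩
  · rw [Set.range_comp, e.symm.range_eq_univ, Set.image_univ, Subtype.range_coe]
  · rw [Nat.card_coe_set_eq, ← index_stabilizer]
    exact Subgroup.index_dvd_of_le hH

namespace Representation

variable (ρ : Representation R G V)

theorem apply_apply_eq_apply_conj (g h : G) (v : V) :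
    ρ h (ρ g v) = ρ g (ρ (g⁻¹ * h * g) v) := by
  rw [← Module.End.mul_apply, ← map_mul, ← Module.End.mul_apply, ← map_mul]
  group

theorem map_map_eq_map_mul (g g' : G) (W : Submodule R V) :
    (W.map (ρ g')).map (ρ g) = W.map (ρ (g * g')) := by
  rw [← Submodule.map_comp, map_mul, Module.End.mul_eq_comp]

theorem map_one_eq (W : Submodule R V) : W.map (ρ 1) = W := by
  rw [map_one, Module.End.one_eq_id, Submodule.map_id]

theorem map_inv_map (g : G) (W : Submodule R V) : (W.map (ρ g)).map (ρ g⁻¹) = W := by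
  rw [map_map_eq_map_mul, inv_mul_cancel, map_one_eq]

theorem map_map_inv (g : G) (W : Submodule R V) : (W.map (ρ g⁻¹)).map (ρ g) = W := by
  rw [map_map_eq_map_mul, mul_inv_cancel, map_one_eq]

abbrev submoduleMulAction : MulAction G (Submodule R V) where
  smul g W := W.map (ρ g)
  one_smul := ρ.map_one_eq
  mul_smul g g' W := (ρ.map_map_eq_map_mul g g' W).symm

theorem iSup_map_eq_top
    (hirr : ∀ W : Submodule R V, (∀ g : G, ∀ v ∈ W, ρ g v ∈ W) → W = ⊥ ∨ W = ⊤)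
    {W : Submodule R V} (hW : W ≠ ⊥) : ⨆ g, W.map (ρ g) = ⊤ := by
  refine (hirr _ fun g v hv => ?_).resolve_left fun h => hW (eq_bot_iff.2 ?_)
  · have hmap_le : (⨆ g', W.map (ρ g')).map (ρ g) ≤ ⨆ g', W.map (ρ g') := by
      rw [Submodule.map_iSup]
      exact iSup_le fun g' => (ρ.map_map_eq_map_mul g g' W).trans_le
        (le_iSup (fun g'' => W.map (ρ g'')) (g * g'))
    exact hmap_le (Submodule.mem_map_of_mem hv)
  · calc W = W.map (ρ 1) := (ρ.map_one_eq W).symm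
      _ ≤ ⨆ g, W.map (ρ g) := le_iSup (fun g => W.map (ρ g)) 1
      _ = ⊥ := h

theorem finiteDimensional_of_irreducible [Finite G] (hne : ∃ v : V, v ≠ 0)
    (hirr : ∀ W : Submodule R V, (∀ g : G, ∀ v ∈ W, ρ g v ∈ W) → W = ⊥ ∨ W = ⊤) :
    FiniteDimensional R V := by
  obtain ⟨v, hv⟩ := hne
  have htop := ρ.iSup_map_eq_top hirr (W := R ∙ v) (mt Submodule.span_singleton_eq_bot.1 hv)
  exact Module.finite_def.2 <|
    htop ▸ Submodule.fg_iSup _ fun g => (Submodule.fg_span_singleton v).map _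

end Representation

section

variable {H : Subgroup G} {ρ : Representation R G V} {S T W : Submodule R V}

theorem IsHInvariant.map_le (hW : IsHInvariant H ρ W) {h : G} (hh : h ∈ H) :
    W.map (ρ h) ≤ W :=
  Submodule.map_le_iff_le_comap.2 fun v hv => hW h hh v hv

theorem IsHInvariant.map_eq (hW : IsHInvariant H ρ W) {h : G} (hh : h ∈ H) :
    W.map (ρ h) = W :=
  (hW.map_le hh).antisymm <| by
    simpa only [ρ.map_map_inv] using Submodule.map_mono (f := ρ h) (hW.map_le (inv_mem hh))

theorem IsHInvariant.map_rho [hH : H.Normal] (hW : IsHInvariant H ρ W) (g : G) :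
    IsHInvariant H ρ (W.map (ρ g)) := by
  rintro h hh _ ⟨u, hu, rfl⟩
  rw [ρ.apply_apply_eq_apply_conj]
  exact Submodule.mem_map_of_mem (hW _ (hH.conj_mem' h hh g) u hu)

theorem isHInvariant_sSup {𝒲 : Set (Submodule R V)} (h𝒲 : ∀ W ∈ 𝒲, IsHInvariant H ρ W) :
    IsHInvariant H ρ (sSup 𝒲) := by
  intro h hh v hv
  have hle : sSup 𝒲 ≤ (sSup 𝒲).comap (ρ h) :=
    sSup_le fun W hW w hw => le_sSup hW (h𝒲 W hW h hh w hw)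
  exact hle hv

theorem IsHSimple.map_rho [H.Normal] (hS : IsHSimple H ρ S) (g : G) :
    IsHSimple H ρ (S.map (ρ g)) := by
  obtain ⟨hne, hinv, hmin⟩ := hS
  refine ⟨fun h => hne ?_, hinv.map_rho g, fun W hle hW => ?_⟩
  · rw [← ρ.map_inv_map g S, h, Submodule.map_bot]
  · have hle' : W.map (ρ g⁻¹) ≤ S := by
      simpa only [ρ.map_inv_map] using Submodule.map_mono (f := ρ g⁻¹) hle
    rw [← ρ.map_map_inv g W]
    rcases hmin _ hle' (hW.map_rho g⁻¹) with h | h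
    · left
      rw [h, Submodule.map_bot]
    · right
      rw [h]

theorem HIsoSub.refl (W : Submodule R V) : HIsoSub H ρ W W :=
  ⟨LinearMap.id, fun _ _ _ _ => rfl, Set.injOn_id _, Submodule.map_id W⟩

theorem HIsoSub.trans (hST : HIsoSub H ρ S T) (hTW : HIsoSub H ρ T W) : HIsoSub H ρ S W := by
  obtain ⟨f, hf, hfinj, rfl⟩ := hST
  obtain ⟨f', hf', hf'inj, rfl⟩ := hTW
  refine ⟨f' ∘ₗ f, fun h hh v hv => ?_,
    hf'inj.comp hfinj fun v hv => Submodule.mem_map_of_mem hv, Submodule.map_comp _ _ _⟩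
  rw [LinearMap.comp_apply, hf h hh v hv, hf' h hh _ (Submodule.mem_map_of_mem hv),
    LinearMap.comp_apply]

theorem HIsoSub.symm (hS : IsHInvariant H ρ S) (hST : HIsoSub H ρ S T) : HIsoSub H ρ T S := by
  obtain ⟨f, hf, hfinj, rfl⟩ := hST
  obtain ⟨g, hgf⟩ := (f ∘ₗ S.subtype).exists_leftInverse_of_injective <|
    LinearMap.ker_eq_bot.2 fun x y hxy => Subtype.ext (hfinj x.2 y.2 hxy)
  have hgf' : ∀ x ∈ S, (g (f x) : V) = x := fun x hx =>
    congrArg Subtype.val (LinearMap.congr_fun hgf ⟨x, hx⟩)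
  refine ⟨S.subtype ∘ₗ g, ?_, ?_, ?_⟩
  · rintro h hh _ ⟨x, hx, rfl⟩
    simp only [LinearMap.comp_apply, Submodule.subtype_apply]
    rw [← hf h hh x hx, hgf' _ (hS h hh x hx), hgf' x hx]
  · rintro _ ⟨x, hx, rfl⟩ _ ⟨y, hy, rfl⟩ hxy
    simp only [LinearMap.comp_apply, Submodule.subtype_apply, hgf' x hx, hgf' y hy] at hxy
    rw [hxy]
  · refine le_antisymm ?_ fun x hx => ⟨f x, Submodule.mem_map_of_mem hx, hgf' x hx⟩
    rintro _ ⟨_, -, rfl⟩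
    exact (g _).2

theorem HIsoSub.map_rho [hH : H.Normal] (hST : HIsoSub H ρ S T) (g : G) :
    HIsoSub H ρ (S.map (ρ g)) (T.map (ρ g)) := by
  obtain ⟨f, hf, hfinj, rfl⟩ := hST
  have hconj : (ρ g ∘ₗ f ∘ₗ ρ g⁻¹) ∘ₗ ρ g = ρ g ∘ₗ f := by
    ext v
    simp
  refine ⟨ρ g ∘ₗ f ∘ₗ ρ g⁻¹, ?_, ?_, ?_⟩
  · rintro h hh _ ⟨u, hu, rfl⟩
    simp only [LinearMap.comp_apply, ρ.apply_apply_eq_apply_conj g h, ρ.inv_self_apply,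
      hf _ (hH.conj_mem' h hh g) u hu]
  · rintro _ ⟨x, hx, rfl⟩ _ ⟨y, hy, rfl⟩ hxy
    simp only [LinearMap.comp_apply, ρ.inv_self_apply] at hxy
    rw [hfinj hx hy ((ρ.apply_bijective g).1 hxy)]
  · rw [← Submodule.map_comp, hconj, Submodule.map_comp]

variable (H ρ) in
def hIsotypicComponent (S : Submodule R V) : Submodule R V :=
  sSup {W | IsHSimple H ρ W ∧ HIsoSub H ρ S W}

theorem IsHSimple.le_hIsotypicComponent (hS : IsHSimple H ρ S) :
    S ≤ hIsotypicComponent H ρ S :=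
  le_sSup ⟨hS, .refl S⟩

theorem IsHSimple.hIsotypicComponent_ne_bot (hS : IsHSimple H ρ S) :
    hIsotypicComponent H ρ S ≠ ⊥ := fun h =>
  hS.1 (eq_bot_iff.2 (h ▸ hS.le_hIsotypicComponent))

theorem isHInvariant_hIsotypicComponent : IsHInvariant H ρ (hIsotypicComponent H ρ S) :=
  isHInvariant_sSup fun _ hW => hW.1.2.1

theorem HIsoSub.hIsotypicComponent_eq (hS : IsHInvariant H ρ S) (hST : HIsoSub H ρ S T) :
    hIsotypicComponent H ρ S = hIsotypicComponent H ρ T := by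
  unfold hIsotypicComponent
  congr! 3 with W
  exact and_congr_right fun _ => ⟨(hST.symm hS).trans, hST.trans⟩

theorem hIsotypicComponent_map_rho [H.Normal] (S : Submodule R V) (g : G) :
    (hIsotypicComponent H ρ S).map (ρ g) = hIsotypicComponent H ρ (S.map (ρ g)) := by
  have himage : Submodule.map (ρ g) '' {W | IsHSimple H ρ W ∧ HIsoSub H ρ S W} =
      {W | IsHSimple H ρ W ∧ HIsoSub H ρ (S.map (ρ g)) W} := by
    ext W
    constructor
    · rintro ⟨W, ⟨hW, hSW⟩, rfl⟩
      exact ⟨hW.map_rho g, hSW.map_rho g⟩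
    · rintro ⟨hW, hSW⟩
      refine ⟨W.map (ρ g⁻¹), ⟨hW.map_rho g⁻¹, ?_⟩, ρ.map_map_inv g W⟩
      simpa only [ρ.map_inv_map] using hSW.map_rho g⁻¹
  rw [hIsotypicComponent, hIsotypicComponent, ← himage, sSup_image]
  exact (Submodule.gc_map_comap _).l_sSup

theorem IsIsotypicComponent.map_rho [H.Normal] (hW : IsIsotypicComponent H ρ W) (g : G) :
    IsIsotypicComponent H ρ (W.map (ρ g)) := by
  obtain ⟨S, hS, rfl⟩ := hW
  exact ⟨_, hS.map_rho g, hIsotypicComponent_map_rho S g⟩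

theorem IsHInvariant.exists_isProj_equivariant [Finite H] (hH : (Nat.card H : R) ≠ 0)
    (hW : IsHInvariant H ρ W) :
    ∃ π : V →ₗ[R] V, LinearMap.IsProj W π ∧ ∀ h ∈ H, ∀ v, π (ρ h v) = ρ h (π v) := by
  have := Fintype.ofFinite H
  obtain ⟨q, hq⟩ := W.subtype.exists_leftInverse_of_injective W.ker_subtype
  have hq' : ∀ w ∈ W, (q w : V) = w := fun w hw =>
    congrArg Subtype.val (LinearMap.congr_fun hq ⟨w, hw⟩)
  set π : V →ₗ[R] V := (Nat.card H : R)⁻¹ • ∑ h : H, ρ (h : G)⁻¹ ∘ₗ W.subtype ∘ₗ q ∘ₗ ρ h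
  have hπ : ∀ v, π v = (Nat.card H : R)⁻¹ • ∑ h : H, ρ (h : G)⁻¹ (q (ρ h v)) := fun v => by
    simp [π, LinearMap.sum_apply]
  refine ⟨π, ⟨fun v => ?_, fun w hw => ?_⟩, fun h₀ hh₀ v => ?_⟩
  · rw [hπ]
    exact W.smul_mem _ (W.sum_mem fun h _ => hW _ (inv_mem h.2) _ (q _).2)
  · rw [hπ, Finset.sum_congr rfl fun h _ => by rw [hq' _ (hW h h.2 w hw), ρ.inv_self_apply],
      Finset.sum_const, Finset.card_univ, ← Nat.cast_smul_eq_nsmul R, smul_smul,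
      Nat.card_eq_fintype_card, inv_mul_cancel₀ (Nat.card_eq_fintype_card (α := H) ▸ hH),
      one_smul]
  · rw [hπ, hπ, map_smul, map_sum]
    congr 1
    refine Fintype.sum_equiv (Equiv.mulRight ⟨h₀, hh₀⟩) _ _ fun h => ?_
    simp only [Equiv.coe_mulRight, Subgroup.coe_mul, mul_inv_rev, map_mul, Module.End.mul_apply,
      ρ.self_inv_apply]

theorem IsHInvariant.exists_isCompl [Finite H] (hH : (Nat.card H : R) ≠ 0)
    (hW : IsHInvariant H ρ W) : ∃ W', IsHInvariant H ρ W' ∧ IsCompl W W' := by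
  obtain ⟨π, hπ, hequiv⟩ := hW.exists_isProj_equivariant hH
  refine ⟨LinearMap.ker π, fun h hh v hv => ?_, hπ.isCompl⟩
  rw [LinearMap.mem_ker, hequiv h hh, LinearMap.mem_ker.1 hv, map_zero]

theorem IsHSimple.hIsoSub_of_not_le_ker (hW : IsHSimple H ρ W) (hT : IsHSimple H ρ T)
    {π : V →ₗ[R] V} (hπ : ∀ h ∈ H, ∀ v ∈ W, π (ρ h v) = ρ h (π v)) (hWT : W.map π ≤ T)
    (hker : ¬ W ≤ LinearMap.ker π) : HIsoSub H ρ W T := by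
  have hker_inv : IsHInvariant H ρ (W ⊓ LinearMap.ker π) := fun h hh v ⟨hvW, hvker⟩ =>
    ⟨hW.2.1 h hh v hvW, by
      rw [SetLike.mem_coe, LinearMap.mem_ker, hπ h hh v hvW, LinearMap.mem_ker.1 hvker,
        map_zero]⟩
  have himage_inv : IsHInvariant H ρ (W.map π) := by
    rintro h hh _ ⟨w, hw, rfl⟩
    exact ⟨_, hW.2.1 h hh w hw, hπ h hh w hw⟩
  have hdisj : Disjoint W (LinearMap.ker π) := disjoint_iff.2 <|
    (hW.2.2 _ inf_le_left hker_inv).resolve_right fun h => hker (inf_eq_left.1 h)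
  refine ⟨π, hπ, LinearMap.injOn_of_disjoint_ker le_rfl hdisj, ?_⟩
  exact (hT.2.2 _ hWT himage_inv).resolve_left (mt LinearMap.le_ker_iff_map.2 hker)

theorem hIsoSub_of_not_hIsotypicComponent_le_ker (hT : IsHSimple H ρ T) {π : V →ₗ[R] V}
    (hπT : ∀ v, π v ∈ T) (hπ : ∀ h ∈ H, ∀ v, π (ρ h v) = ρ h (π v))
    (hker : ¬ hIsotypicComponent H ρ S ≤ LinearMap.ker π) : HIsoSub H ρ S T := by
  obtain ⟨W, ⟨hW, hSW⟩, hWker⟩ := not_forall₂.1 (mt sSup_le hker)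
  exact hSW.trans <| hW.hIsoSub_of_not_le_ker hT (fun h hh v _ => hπ h hh v)
    (Submodule.map_le_iff_le_comap.2 fun v _ => hπT v) hWker

theorem IsHSimple.exists_map_hIsotypicComponent_eq [H.Normal] [Finite H]
    (hH : (Nat.card H : R) ≠ 0)
    (hirr : ∀ W : Submodule R V, (∀ g : G, ∀ v ∈ W, ρ g v ∈ W) → W = ⊥ ∨ W = ⊤)
    (hS : IsHSimple H ρ S) (hT : IsHSimple H ρ T) :
    ∃ g, (hIsotypicComponent H ρ S).map (ρ g) = hIsotypicComponent H ρ T := by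
  obtain ⟨π, hπ, hequiv⟩ := hT.2.1.exists_isProj_equivariant hH
  have htop : ¬ ⨆ g, (hIsotypicComponent H ρ S).map (ρ g) ≤ LinearMap.ker π := by
    rw [ρ.iSup_map_eq_top hirr hS.hIsotypicComponent_ne_bot]
    intro h
    obtain ⟨v, hvT, hv0⟩ := (Submodule.ne_bot_iff T).1 hT.1
    exact hv0 ((hπ.map_id v hvT).symm.trans (h Submodule.mem_top))
  obtain ⟨g, hg⟩ := not_forall.1 (mt iSup_le htop)
  rw [hIsotypicComponent_map_rho] at hg
  refine ⟨g, ?_⟩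
  rw [hIsotypicComponent_map_rho]
  exact HIsoSub.hIsotypicComponent_eq (hS.map_rho g).2.1
    (hIsoSub_of_not_hIsotypicComponent_le_ker hT hπ.map_mem hequiv hg)

theorem IsIsotypicComponent.exists_map_eq [H.Normal] [Finite H] (hH : (Nat.card H : R) ≠ 0)
    (hirr : ∀ W : Submodule R V, (∀ g : G, ∀ v ∈ W, ρ g v ∈ W) → W = ⊥ ∨ W = ⊤)
    (hW : IsIsotypicComponent H ρ W) (hW' : IsIsotypicComponent H ρ T) :
    ∃ g, W.map (ρ g) = T := by
  obtain ⟨S, hS, rfl⟩ := hW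
  obtain ⟨S', hS', rfl⟩ := hW'
  exact hS.exists_map_hIsotypicComponent_eq hH hirr hS'

variable (H ρ) in
theorem exists_isHSimple [IsArtinian R V] [Nontrivial V] : ∃ S, IsHSimple H ρ S := by
  obtain ⟨S, ⟨hS0, hSinv⟩, hmin⟩ := wellFounded_lt.has_min
    {W : Submodule R V | W ≠ ⊥ ∧ IsHInvariant H ρ W} ⟨⊤, top_ne_bot, fun _ _ _ _ => trivial⟩
  exact ⟨S, hS0, hSinv, fun W hle hW =>
    or_iff_not_imp_left.2 fun hW0 => hle.eq_of_not_lt (hmin W ⟨hW0, hW⟩)⟩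

end

/-- Let `G` be finite, `H ⊴ G`, `char R ∤ |G|`, and `V` an irreducible `R`-representation of
`G`. Then `V|_H` is semisimple, `G` permutes the `H`-isotypic components of `V|_H`
transitively, and the number of isotypic components divides the index `[G:H]`. -/
theorem clifford_isotypic_components (H : Subgroup G) [H.Normal] [Fintype G]
    (hchar : (Fintype.card G : R) ≠ 0)
    (ρ : Representation R G V)
    (hne : ∃ v : V, v ≠ 0)
    (hirr : ∀ W : Submodule R V, (∀ g : G, ∀ v ∈ W, ρ g v ∈ W) → W = ⊥ ∨ W = ⊤) :
    (∀ W : Submodule R V, IsHInvariant H ρ W →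
      ∃ W' : Submodule R V, IsHInvariant H ρ W' ∧ IsCompl W W') ∧
    ∃ (n : ℕ) (C : Fin n → Submodule R V),
      Function.Injective C ∧
      (∀ i, IsIsotypicComponent H ρ (C i)) ∧
      (∀ W : Submodule R V, IsIsotypicComponent H ρ W → ∃ i, C i = W) ∧
      (∀ i j : Fin n, ∃ g : G, (C i).map (ρ g) = C j) ∧
      n ∣ H.index := by
  have hH : (Nat.card H : R) ≠ 0 := fun h0 => hchar <| by
    obtain ⟨k, hk⟩ := H.card_subgroup_dvd_card
    rw [← Nat.card_eq_fintype_card, hk, Nat.cast_mul, h0, zero_mul]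
  have := ρ.finiteDimensional_of_irreducible hne hirr
  have : Nontrivial V := let ⟨v, hv⟩ := hne; ⟨⟨v, 0, hv⟩⟩
  obtain ⟨S₀, hS₀⟩ := exists_isHSimple H ρ
  have hC₀ : IsIsotypicComponent H ρ (hIsotypicComponent H ρ S₀) := ⟨S₀, hS₀, rfl⟩
  -- `g • W` unfolds to `W.map (ρ g)`, so orbits and stabilizers below are statements about `ρ`
  let := ρ.submoduleMulAction
  have hstab : H ≤ MulAction.stabilizer G (hIsotypicComponent H ρ S₀) := fun _ hh =>
    (isHInvariant_hIsotypicComponent (ρ := ρ) (S := S₀)).map_eq hh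
  obtain ⟨n, C, hC, hrange, hdvd⟩ := MulAction.exists_fin_enumeration_orbit_dvd_index _ hstab
  have hmem : ∀ W, IsIsotypicComponent H ρ W ↔ W ∈ Set.range C := fun W => by
    rw [hrange]
    exact ⟨hC₀.exists_map_eq hH hirr, fun ⟨g, hg⟩ => hg ▸ hC₀.map_rho g⟩
  refine ⟨fun W hW => hW.exists_isCompl hH, n, C, hC, fun i => (hmem _).2 ⟨i, rfl⟩,
    fun W hW => (hmem W).1 hW, fun i j => ?_, hdvd⟩
  exact ((hmem _).2 ⟨i, rfl⟩).exists_map_eq hH hirr ((hmem _).2 ⟨j, rfl⟩)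

end
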